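/- arXiv:2010.13988 — 2 statements merged into one kernel-verified Lean document; each statement's English description precedes it below -/
import Mathlib

section
/- Let H be a reproducing kernel Hilbert space with kernel K satisfying K(x,x) ≤ κ² for all x ∈ X, let the loss l be σ-admissible with respect to H, and for λ > 0 let A_S be a minimizer over h ∈ H of (1/m)Σ_{j=1}^m l(h, z_j) + λ‖h‖_K², and A_{S^{-i}} a minimizer over h ∈ H of (1/m)Σ_{j≠i} l(h, z_j) + λ‖h‖_K². Then for every training set S = (z_1,…,z_m) with z_j = (x_j,y_j), every 1 ≤ i ≤ m, and every z = (x,y): |l(A_S, z) − l(A_{S^{-i}}, z)| ≤ σ²·κ(x_i)·κ(x)/(2λm); in particular |l(A_S, z) − l(A_{S^{-i}}, z)| ≤ σ²κ²/(2λm). -/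
/-
Adding `λ‖·‖²` to a convex objective makes it `2λ`-strongly convex, so each minimizer `f`
satisfies `F g ≥ F f + λ‖g - f‖²`. Applying this to both regularized risks, each at the other's
minimizer, and adding, the common part cancels: `2λ‖A_S - A_{S^{-i}}‖²` is bounded by the change
of the single term `l(·, z_i)/m`, which by admissibility and the reproducing property is at most
`σ κ(x_i) ‖A_S - A_{S^{-i}}‖ / m`. Hence `‖A_S - A_{S^{-i}}‖ ≤ σ κ(x_i) / (2λm)`, and one more use
of admissibility and reproducing property at `z` gives the bound.
-/

open Set Filter Topology
open scoped RealInnerProductSpace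

lemma convexOn_finset_sum {E ι : Type*} [AddCommMonoid E] [Module ℝ E] {s : Set E}
    (hs : Convex ℝ s) (t : Finset ι) {f : ι → E → ℝ} (hf : ∀ j ∈ t, ConvexOn ℝ s (f j)) :
    ConvexOn ℝ s fun x => ∑ j ∈ t, f j x := by
  classical
  induction t using Finset.induction_on with
  | empty => simpa using convexOn_const 0 hs
  | insert j t hj ih =>
    simp only [Finset.sum_insert hj]
    exact (hf j (t.mem_insert_self j)).add (ih fun k hk => hf k (Finset.mem_insert_of_mem hk))

lemma StrongConvexOn.add_le_of_isMinOn {E : Type*} [NormedAddCommGroup E] [NormedSpace ℝ E]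
    {s : Set E} {f : E → ℝ} {μ : ℝ} (hf : StrongConvexOn s μ f) {x y : E}
    (hx : x ∈ s) (hmin : IsMinOn f s x) (hy : y ∈ s) :
    f x + μ / 2 * ‖y - x‖ ^ 2 ≤ f y := by
  have hsegment : ∀ t ∈ Ioo (0 : ℝ) 1, f x + (1 - t) * (μ / 2 * ‖y - x‖ ^ 2) ≤ f y := by
    rintro t ⟨ht0, ht1⟩
    have hmem := hf.1 hx hy (show 0 ≤ 1 - t by linarith) ht0.le (sub_add_cancel 1 t)
    have hconv := hf.2 hx hy (show 0 ≤ 1 - t by linarith) ht0.le (sub_add_cancel 1 t)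
    have hle := isMinOn_iff.mp hmin _ hmem
    simp only [smul_eq_mul, norm_sub_rev x y] at hconv
    have : t * (f x + (1 - t) * (μ / 2 * ‖y - x‖ ^ 2)) ≤ t * f y := by linarith
    exact le_of_mul_le_mul_left this ht0
  have hlim : Tendsto (fun t : ℝ => f x + (1 - t) * (μ / 2 * ‖y - x‖ ^ 2)) (𝓝[>] 0)
      (𝓝 (f x + μ / 2 * ‖y - x‖ ^ 2)) := by
    have : Continuous fun t : ℝ => f x + (1 - t) * (μ / 2 * ‖y - x‖ ^ 2) := by fun_prop
    simpa using (this.tendsto 0).mono_left nhdsWithin_le_nhds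
  exact le_of_tendsto hlim (by filter_upwards [Ioo_mem_nhdsGT one_pos] using hsegment)

section Regularized

variable {H : Type*} [NormedAddCommGroup H] [InnerProductSpace ℝ H]

lemma ConvexOn.strongConvexOn_add_mul_norm_sq {φ : H → ℝ} (hφ : ConvexOn ℝ univ φ) (lam : ℝ) :
    StrongConvexOn univ (2 * lam) fun h => φ h + lam * ‖h‖ ^ 2 := by
  rw [strongConvexOn_iff_convex]
  convert hφ using 2 with h
  ring

lemma add_mul_norm_sub_sq_le_of_forall_le {φ : H → ℝ} (hφ : ConvexOn ℝ univ φ) {lam : ℝ}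
    {f : H} (hf : ∀ h, φ f + lam * ‖f‖ ^ 2 ≤ φ h + lam * ‖h‖ ^ 2) (g : H) :
    φ f + lam * ‖f‖ ^ 2 + lam * ‖g - f‖ ^ 2 ≤ φ g + lam * ‖g‖ ^ 2 := by
  have := (hφ.strongConvexOn_add_mul_norm_sq lam).add_le_of_isMinOn (mem_univ f)
    (fun h _ => hf h) (mem_univ g)
  linarith

lemma two_mul_norm_sub_sq_le_of_forall_le {φ ψ : H → ℝ} (hφ : ConvexOn ℝ univ φ)
    (hψ : ConvexOn ℝ univ ψ) {lam : ℝ} {f g : H}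
    (hf : ∀ h, φ f + ψ f + lam * ‖f‖ ^ 2 ≤ φ h + ψ h + lam * ‖h‖ ^ 2)
    (hg : ∀ h, φ g + lam * ‖g‖ ^ 2 ≤ φ h + lam * ‖h‖ ^ 2) :
    2 * lam * ‖f - g‖ ^ 2 ≤ ψ g - ψ f := by
  have hfg := add_mul_norm_sub_sq_le_of_forall_le (hφ.add hψ) hf g
  have hgf := add_mul_norm_sub_sq_le_of_forall_le hφ hg f
  simp only [Pi.add_apply, norm_sub_rev g f] at hfg hgf
  linarith

end Regularized

section Reproducing

variable {X Y H : Type*} [NormedAddCommGroup H] [InnerProductSpace ℝ H]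
  {ev : H →ₗ[ℝ] X → ℝ} {Kx : X → H} {c : ℝ → Y → ℝ}

lemma convexOn_comp_eval (hconv : ∀ y, ConvexOn ℝ univ fun t => c t y) (x : X) (y : Y) :
    ConvexOn ℝ univ fun h => c (ev h x) y :=
  (hconv y).comp_linearMap ((LinearMap.proj x).comp ev)

lemma abs_sub_comp_eval_le_of_reproducing (hrepr : ∀ h x, ev h x = ⟪h, Kx x⟫) {σ : ℝ}
    (hσ : 0 ≤ σ) (hadm : ∀ y₁ y₂ y', |c y₁ y' - c y₂ y'| ≤ σ * |y₁ - y₂|) (f g : H) (z : X × Y) :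
    |c (ev f z.1) z.2 - c (ev g z.1) z.2| ≤ σ * (‖f - g‖ * ‖Kx z.1‖) := by
  have heval : |ev f z.1 - ev g z.1| ≤ ‖f - g‖ * ‖Kx z.1‖ := by
    rw [hrepr, hrepr, ← inner_sub_left]
    exact abs_real_inner_le_norm _ _
  exact (hadm _ _ _).trans (by gcongr)

variable {m : ℕ} {S : Fin m → X × Y} {i : Fin m} {lam : ℝ} {fS fi : H}

lemma two_mul_norm_sub_sq_le_of_regularized_erm_erase
    (hconv : ∀ y, ConvexOn ℝ univ fun t => c t y)
    (hfS : ∀ h : H, (∑ j, c (ev fS (S j).1) (S j).2) / m + lam * ‖fS‖ ^ 2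
      ≤ (∑ j, c (ev h (S j).1) (S j).2) / m + lam * ‖h‖ ^ 2)
    (hfi : ∀ h : H, (∑ j ∈ Finset.univ.erase i, c (ev fi (S j).1) (S j).2) / m + lam * ‖fi‖ ^ 2
      ≤ (∑ j ∈ Finset.univ.erase i, c (ev h (S j).1) (S j).2) / m + lam * ‖h‖ ^ 2) :
    2 * lam * ‖fS - fi‖ ^ 2 ≤ (c (ev fi (S i).1) (S i).2 - c (ev fS (S i).1) (S i).2) / m := by
  have hm_inv : (0 : ℝ) ≤ (m : ℝ)⁻¹ := inv_nonneg.2 (Nat.cast_nonneg m)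
  set φ : H → ℝ := fun h => (m : ℝ)⁻¹ * ∑ j ∈ Finset.univ.erase i, c (ev h (S j).1) (S j).2
  set ψ : H → ℝ := fun h => (m : ℝ)⁻¹ * c (ev h (S i).1) (S i).2
  have hφ : ConvexOn ℝ univ φ :=
    (convexOn_finset_sum convex_univ _ fun j _ => convexOn_comp_eval hconv _ _).smul hm_inv
  have hψ : ConvexOn ℝ univ ψ := (convexOn_comp_eval hconv _ _).smul hm_inv
  rw [sub_div]
  simp only [div_eq_inv_mul]
  refine two_mul_norm_sub_sq_le_of_forall_le hφ hψ (fun h => ?_) (fun h => ?_)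
  · simp only [φ, ψ, ← div_eq_inv_mul, ← add_div, Finset.sum_erase_add _ _ (Finset.mem_univ i)]
    exact hfS h
  · simpa only [φ, ← div_eq_inv_mul] using hfi h

lemma norm_sub_le_of_regularized_erm_erase (hrepr : ∀ h x, ev h x = ⟪h, Kx x⟫) {σ : ℝ}
    (hσ : 0 ≤ σ) (hconv : ∀ y, ConvexOn ℝ univ fun t => c t y)
    (hadm : ∀ y₁ y₂ y', |c y₁ y' - c y₂ y'| ≤ σ * |y₁ - y₂|) (hlam : 0 < lam) (hm : 0 < m)
    (hfS : ∀ h : H, (∑ j, c (ev fS (S j).1) (S j).2) / m + lam * ‖fS‖ ^ 2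
      ≤ (∑ j, c (ev h (S j).1) (S j).2) / m + lam * ‖h‖ ^ 2)
    (hfi : ∀ h : H, (∑ j ∈ Finset.univ.erase i, c (ev fi (S j).1) (S j).2) / m + lam * ‖fi‖ ^ 2
      ≤ (∑ j ∈ Finset.univ.erase i, c (ev h (S j).1) (S j).2) / m + lam * ‖h‖ ^ 2) :
    ‖fS - fi‖ ≤ σ * ‖Kx (S i).1‖ / (2 * lam * m) := by
  have hM : (0 : ℝ) < m := Nat.cast_pos.mpr hm
  have hgain : c (ev fi (S i).1) (S i).2 - c (ev fS (S i).1) (S i).2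
      ≤ σ * (‖fS - fi‖ * ‖Kx (S i).1‖) :=
    (le_abs_self _).trans <| (abs_sub_comm _ _).trans_le <|
      abs_sub_comp_eval_le_of_reproducing hrepr hσ hadm fS fi (S i)
  have hsq : 2 * lam * m * ‖fS - fi‖ ^ 2 ≤ σ * ‖Kx (S i).1‖ * ‖fS - fi‖ := by
    have := two_mul_norm_sub_sq_le_of_regularized_erm_erase hconv hfS hfi
    rw [le_div_iff₀ hM] at this
    linarith
  rcases (norm_nonneg (fS - fi)).eq_or_lt with h0 | hpos
  · rw [← h0]
    positivity
  · rw [le_div_iff₀ (by positivity)]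
    nlinarith

end Reproducing

/-- Lemma 4.3 of the paper / variant of Theorem 22 of
Bousquet–Elisseeff. Let `H` be an RKHS of real functions on `X` (realized by a linear
evaluation map `ev : H →ₗ[ℝ] X → ℝ` and a feature map `Kx : X → H` with the reproducing
property `ev h x = ⟪h, Kx x⟫`), with `κ(x) = √K(x,x) = ‖Kx x‖` bounded by `κ`. If the loss
`l(h,(x,y)) = c (ev h x) y` is `σ`-admissible and `A_S`, `A_{S\i}` minimize the
`λ‖·‖²`-regularized empirical risks on `S` and `S^{\i}` respectively, then
`|l(A_S,z) − l(A_{S\i},z)| ≤ σ²·κ(x_i)·κ(x)/(2λm) ≤ σ²κ²/(2λm)`. -/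
theorem rkhs_regularized_erm_locally_elastic_stability
    (X Y H : Type*) [NormedAddCommGroup H] [InnerProductSpace ℝ H]
    (ev : H →ₗ[ℝ] X → ℝ) (Kx : X → H)
    (hrepr : ∀ (h : H) (x : X), ev h x = ⟪h, Kx x⟫)
    (c : ℝ → Y → ℝ) (σ : ℝ) (hσ : 0 ≤ σ)
    (hconv : ∀ y' : Y, ConvexOn ℝ Set.univ fun t => c t y')
    (hadm : ∀ (y₁ y₂ : ℝ) (y' : Y), |c y₁ y' - c y₂ y'| ≤ σ * |y₁ - y₂|)
    (κ : ℝ) (hκ0 : 0 ≤ κ) (hκ : ∀ x : X, Real.sqrt ⟪Kx x, Kx x⟫ ≤ κ)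
    (lam : ℝ) (hlam : 0 < lam)
    (m : ℕ) (hm : 0 < m) (S : Fin m → X × Y) (i : Fin m)
    (fS fi : H)
    (hfS : ∀ h : H,
      (∑ j, c (ev fS (S j).1) (S j).2) / m + lam * ‖fS‖ ^ 2
        ≤ (∑ j, c (ev h (S j).1) (S j).2) / m + lam * ‖h‖ ^ 2)
    (hfi : ∀ h : H,
      (∑ j ∈ Finset.univ.erase i, c (ev fi (S j).1) (S j).2) / m + lam * ‖fi‖ ^ 2
        ≤ (∑ j ∈ Finset.univ.erase i, c (ev h (S j).1) (S j).2) / m + lam * ‖h‖ ^ 2)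
    (z : X × Y) :
    |c (ev fS z.1) z.2 - c (ev fi z.1) z.2|
        ≤ σ ^ 2 * Real.sqrt ⟪Kx (S i).1, Kx (S i).1⟫ * Real.sqrt ⟪Kx z.1, Kx z.1⟫ /
            (2 * lam * m) ∧
      |c (ev fS z.1) z.2 - c (ev fi z.1) z.2| ≤ σ ^ 2 * κ ^ 2 / (2 * lam * m) := by
  have hdist := norm_sub_le_of_regularized_erm_erase hrepr hσ hconv hadm hlam hm hfS hfi
  have hloss : |c (ev fS z.1) z.2 - c (ev fi z.1) z.2|
      ≤ σ ^ 2 * ‖Kx (S i).1‖ * ‖Kx z.1‖ / (2 * lam * m) :=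
    calc _ ≤ σ * (‖fS - fi‖ * ‖Kx z.1‖) :=
          abs_sub_comp_eval_le_of_reproducing hrepr hσ hadm fS fi z
      _ ≤ σ * (σ * ‖Kx (S i).1‖ / (2 * lam * m) * ‖Kx z.1‖) := by gcongr
      _ = _ := by ring
  have hκ' : ∀ x, ‖Kx x‖ ≤ κ := fun x => by simpa only [← norm_eq_sqrt_real_inner] using hκ x
  simp only [← norm_eq_sqrt_real_inner]
  refine ⟨hloss, hloss.trans ?_⟩
  calc σ ^ 2 * ‖Kx (S i).1‖ * ‖Kx z.1‖ / (2 * lam * m) ≤ σ ^ 2 * κ * κ / (2 * lam * m) := by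
        gcongr <;> exact hκ' _
    _ = σ ^ 2 * κ ^ 2 / (2 * lam * m) := by ring
end

section
/- Let m ≥ 1 be an integer and let κ, λ, B > 0, 0 ≤ E ≤ κ, and δ ∈ (0, 1/2) be real numbers. If 2κ²/λ + B ≥ 2√2·(3κE/λ + 2B), then the locally elastic stability bound is no larger than the uniform stability bound: κE/(λm) + (3κE/λ + 2B)·√(2·log(2/δ)/m) ≤ κ²/(λm) + (2κ²/λ + B)·√(log(1/δ)/(2m)). -/
/-- Comparison of the locally-elastic-stability bound (B₂) with the
uniform-stability bound (B₁) for bounded SVM regression. -/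
theorem locally_elastic_bound_le_uniform_bound_svm
    (m : ℕ) (hm : 1 ≤ m) (κ lam B E δ : ℝ)
    (hκ : 0 < κ) (hlam : 0 < lam) (hB : 0 < B) (hE0 : 0 ≤ E) (hEκ : E ≤ κ)
    (hδ0 : 0 < δ) (hδ : δ < 1 / 2)
    (hcond : 2 * κ ^ 2 / lam + B ≥ 2 * Real.sqrt 2 * (3 * κ * E / lam + 2 * B)) :
    κ * E / (lam * m) + (3 * κ * E / lam + 2 * B) * Real.sqrt (2 * Real.log (2 / δ) / m)
      ≤ κ ^ 2 / (lam * m) + (2 * κ ^ 2 / lam + B) * Real.sqrt (Real.log (1 / δ) / (2 * m)) := by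
  have hm' : (0:ℝ) < m := by exact_mod_cast hm
  have h2δ : (2:ℝ) ≤ 1 / δ := by rw [le_div_iff₀ hδ0]; linarith
  have hlog1 : 0 ≤ Real.log (1 / δ) := Real.log_nonneg (by linarith)
  have hlog2le : Real.log (2 / δ) ≤ 2 * Real.log (1 / δ) := by
    have he : Real.log (2 / δ) = Real.log 2 + Real.log (1 / δ) := by
      rw [show (2:ℝ) / δ = 2 * (1 / δ) by ring,
        Real.log_mul two_ne_zero (by positivity)]
    have h2 : Real.log 2 ≤ Real.log (1 / δ) :=
      Real.log_le_log (by norm_num) h2δ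
    linarith
  have hlog2 : 0 ≤ Real.log (2 / δ) := Real.log_nonneg (by rw [le_div_iff₀ hδ0]; linarith)
  have hsqrt : Real.sqrt (2 * Real.log (2 / δ) / m)
      ≤ 2 * Real.sqrt 2 * Real.sqrt (Real.log (1 / δ) / (2 * m)) := by
    have h8 : 2 * Real.sqrt 2 * Real.sqrt (Real.log (1 / δ) / (2 * m))
        = Real.sqrt (8 * (Real.log (1 / δ) / (2 * m))) := by
      rw [Real.sqrt_mul (by norm_num : (0:ℝ) ≤ 8),
        show (8:ℝ) = 2 ^ 2 * 2 by norm_num,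
        Real.sqrt_mul (by positivity), Real.sqrt_sq (by norm_num : (0:ℝ) ≤ 2)]
    rw [h8]
    apply Real.sqrt_le_sqrt
    have heq : 8 * (Real.log (1 / δ) / (2 * m)) = 4 * Real.log (1 / δ) / m := by
      field_simp; ring
    rw [heq, div_le_div_iff₀ hm' hm']
    nlinarith [hlog2le, hm'.le]
  have hC2 : 0 ≤ 3 * κ * E / lam + 2 * B := by positivity
  have h1 : κ * E / (lam * m) ≤ κ ^ 2 / (lam * m) := by
    gcongr
    nlinarith
  have h2 : (3 * κ * E / lam + 2 * B) * Real.sqrt (2 * Real.log (2 / δ) / m)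
      ≤ (2 * κ ^ 2 / lam + B) * Real.sqrt (Real.log (1 / δ) / (2 * m)) :=
    calc (3 * κ * E / lam + 2 * B) * Real.sqrt (2 * Real.log (2 / δ) / m)
        ≤ (3 * κ * E / lam + 2 * B) * (2 * Real.sqrt 2 * Real.sqrt (Real.log (1 / δ) / (2 * m))) :=
          mul_le_mul_of_nonneg_left hsqrt hC2
      _ = (2 * Real.sqrt 2 * (3 * κ * E / lam + 2 * B)) * Real.sqrt (Real.log (1 / δ) / (2 * m)) := by
          ring
      _ ≤ (2 * κ ^ 2 / lam + B) * Real.sqrt (Real.log (1 / δ) / (2 * m)) :=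
          mul_le_mul_of_nonneg_right hcond (Real.sqrt_nonneg _)
  linarith
end
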